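/- Let Δ0 → Δ1 → ⋯ → Δk be a sequence of finite multisets of points in ℝ² where each step is a transformation by a rectangle R_j with diagonal points (a_j, b_j) and (c_j, d_j), and define f(Δ) = Σ_{(x,y) ∈ Δ} x·y. Then Σ_{j=1}^{k} |a_j − c_j|·|b_j − d_j| ≥ |f(Δ_k) − f(Δ_0)|. That is, the total (unsigned) area of any transformation from Δ0 to Δk is at least |f(Δ_k) − f(Δ_0)|. -/

import Mathlib

/-!
A rectangle transformation changes `f` by exactly the signed area of its rectangle:
`(c b + a d) - (a b + c d) = -(a - c)(b - d)`. Writing `f(Δₖ) - f(Δ₀)` as a telescoping sum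
of these changes, the triangle inequality bounds it by the total unsigned area.
-/

noncomputable def rectTransform (v w : ℝ × ℝ) (Δ : Multiset (ℝ × ℝ)) : Multiset (ℝ × ℝ) :=
  (w.1, v.2) ::ₘ (v.1, w.2) ::ₘ ((Δ.erase v).erase w)

/-- `f(Δ) = Σ_{(x,y) ∈ Δ} x·y`. -/
def fsum (Δ : Multiset (ℝ × ℝ)) : ℝ := (Δ.map fun p => p.1 * p.2).sum

theorem fsum_cons (p : ℝ × ℝ) (Δ : Multiset (ℝ × ℝ)) : fsum (p ::ₘ Δ) = p.1 * p.2 + fsum Δ := by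
  simp only [fsum, Multiset.map_cons, Multiset.sum_cons]

theorem fsum_rectTransform_sub {v w : ℝ × ℝ} {Δ : Multiset (ℝ × ℝ)}
    (hv : v ∈ Δ) (hw : w ∈ Δ) (hne : v ≠ w) :
    fsum (rectTransform v w Δ) - fsum Δ = -((v.1 - w.1) * (v.2 - w.2)) := by
  have hw' : w ∈ Δ.erase v := (Multiset.mem_erase_of_ne hne.symm).2 hw
  have hΔ : fsum Δ = v.1 * v.2 + w.1 * w.2 + fsum ((Δ.erase v).erase w) := by
    conv_lhs => rw [← Multiset.cons_erase hv, ← Multiset.cons_erase hw']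
    rw [fsum_cons, fsum_cons, add_assoc]
  rw [hΔ, rectTransform, fsum_cons, fsum_cons]
  ring

theorem abs_fsum_rectTransform_sub {v w : ℝ × ℝ} {Δ : Multiset (ℝ × ℝ)}
    (hv : v ∈ Δ) (hw : w ∈ Δ) (hne : v ≠ w) :
    |fsum (rectTransform v w Δ) - fsum Δ| = |v.1 - w.1| * |v.2 - w.2| := by
  rw [fsum_rectTransform_sub hv hw hne, abs_neg, abs_mul]

theorem stmt_4 (k : ℕ) (Δ : ℕ → Multiset (ℝ × ℝ)) (v w : ℕ → ℝ × ℝ)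
    (hv : ∀ j < k, v j ∈ Δ j) (hw : ∀ j < k, w j ∈ Δ j)
    (hne : ∀ j < k, v j ≠ w j)
    (hstep : ∀ j < k, Δ (j + 1) = rectTransform (v j) (w j) (Δ j)) :
    ∑ j ∈ Finset.range k, |(v j).1 - (w j).1| * |(v j).2 - (w j).2|
      ≥ |fsum (Δ k) - fsum (Δ 0)| := by
  calc |fsum (Δ k) - fsum (Δ 0)|
      = |∑ j ∈ Finset.range k, (fsum (Δ (j + 1)) - fsum (Δ j))| := by
        rw [Finset.sum_range_sub (fun j => fsum (Δ j))]
    _ ≤ ∑ j ∈ Finset.range k, |fsum (Δ (j + 1)) - fsum (Δ j)| := Finset.abs_sum_le_sum_abs _ _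
    _ = ∑ j ∈ Finset.range k, |(v j).1 - (w j).1| * |(v j).2 - (w j).2| := by
        refine Finset.sum_congr rfl fun j hj => ?_
        have hjk := Finset.mem_range.1 hj
        rw [hstep j hjk, abs_fsum_rectTransform_sub (hv j hjk) (hw j hjk) (hne j hjk)]
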